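/- arXiv:0712.0871 — 4 statements merged into one kernel-verified Lean document; each statement's English description precedes it below -/
import Mathlib

section
/- E_0(C_f, ρ) is a concave function of ρ on [0, ∞), for fixed β_f ∈ (0,1) and C_f ≥ 1. -/
open Real

/-- Gallager function of the `Cf`-bit `β`-erasure channel. -/
noncomputable def E0 (β : ℝ) (Cf : ℕ) (ρ : ℝ) : ℝ :=
  -Real.log (β + (2 : ℝ) ^ (-(ρ * (Cf : ℝ))) * (1 - β))

/-- `E0(C_f, ·)` is concave on `[0, ∞)` for fixed `β_f ∈ (0,1)` and `C_f ≥ 1`. -/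
theorem E0_concaveOn (βf : ℝ) (hβ : βf ∈ Set.Ioo (0 : ℝ) 1) (Cf : ℕ) (hCf : 1 ≤ Cf) :
    ConcaveOn ℝ (Set.Ici (0 : ℝ)) (fun ρ => E0 βf Cf ρ) := by
  obtain ⟨hβ0, hβ1⟩ := hβ
  set a : ℝ := (Cf : ℝ) * Real.log 2 with ha
  set c : ℝ := 1 - βf with hc
  have hcpos : 0 < c := by simp [hc]; linarith
  set h : ℝ → ℝ := fun ρ => βf + Real.exp (-(a * ρ)) * c with hh
  have hpos : ∀ ρ, 0 < h ρ := fun ρ => by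
    have := Real.exp_pos (-(a * ρ))
    have : 0 < Real.exp (-(a * ρ)) * c := by positivity
    simp only [hh]; linarith
  have hE : ∀ ρ, E0 βf Cf ρ = -(Real.log (h ρ)) := by
    intro ρ
    unfold E0
    rw [Real.rpow_def_of_pos (by norm_num : (0:ℝ) < 2),
      show Real.log 2 * (-(ρ * (Cf : ℝ))) = -(a * ρ) from by rw [ha]; ring]
  have hexp : ∀ x : ℝ, HasDerivAt (fun ρ => Real.exp (-(a * ρ)))
      (-a * Real.exp (-(a * x))) x := by
    intro x
    have h1 : HasDerivAt (fun ρ : ℝ => -(a * ρ)) (-a) x := by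
      simpa using ((hasDerivAt_id x).const_mul a).fun_neg
    simpa [mul_comm] using h1.exp
  have hH : ∀ x : ℝ, HasDerivAt h (-a * Real.exp (-(a * x)) * c) x := by
    intro x
    simpa [hh] using ((hexp x).mul_const c).const_add βf
  have hf' : ∀ x : ℝ, HasDerivAt (fun ρ => -(Real.log (h ρ)))
      (a * Real.exp (-(a * x)) * c / h x) x := by
    intro x
    have := ((hH x).log (hpos x).ne').fun_neg
    refine this.congr_deriv ?_
    ring
  have hf'' : ∀ x : ℝ, HasDerivAt (fun ρ => a * Real.exp (-(a * ρ)) * c / h ρ)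
      (-(a ^ 2 * Real.exp (-(a * x)) * c * βf) / (h x) ^ 2) x := by
    intro x
    have hN : HasDerivAt (fun ρ => a * Real.exp (-(a * ρ)) * c)
        (a * (-a * Real.exp (-(a * x))) * c) x := ((hexp x).const_mul a).mul_const c
    have := hN.fun_div (hH x) (hpos x).ne'
    refine this.congr_deriv ?_
    simp only [hh]
    ring
  have hcont : ContinuousOn (fun ρ => -(Real.log (h ρ))) (Set.Ici (0:ℝ)) := by
    apply Continuous.continuousOn
    have : Continuous h := by
      simp only [hh]; fun_prop
    exact (this.log fun x => (hpos x).ne').neg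
  have key : ConcaveOn ℝ (Set.Ici (0:ℝ)) (fun ρ => -(Real.log (h ρ))) := by
    apply concaveOn_of_hasDerivWithinAt2_nonpos (convex_Ici 0) hcont
      (f' := fun x => a * Real.exp (-(a * x)) * c / h x)
      (f'' := fun x => -(a ^ 2 * Real.exp (-(a * x)) * c * βf) / (h x) ^ 2)
    · exact fun x _ => (hf' x).hasDerivWithinAt
    · exact fun x _ => (hf'' x).hasDerivWithinAt
    · intro x _
      apply div_nonpos_of_nonpos_of_nonneg
      · have : 0 ≤ a ^ 2 * Real.exp (-(a * x)) * c * βf := by positivity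
        linarith
      · positivity
  exact key.congr fun ρ _ => (hE ρ).symm
end

section
/- For ε ∈ (0, 1/2) and γ > 0, the binary KL divergence satisfies D(1-ε ‖ exp(-γ)) ≥ (1-ε)γ - ε(ln(1/ε) + 2(1-ε)), where D(1-ε ‖ exp(-γ)) = (1-ε)(ln(1-ε) + γ) + ε(ln(1/(1-exp(-γ))) + ln ε). -/
open Real

/-- Binary KL divergence lower bound:
`D(1-ε ‖ e^{-γ}) ≥ (1-ε)γ - ε(ln(1/ε) + 2(1-ε))` for `ε ∈ (0,1/2)` and `γ > 0`. -/
theorem klBin_lower_bound (ε γ : ℝ) (hε : ε ∈ Set.Ioo (0 : ℝ) (1 / 2)) (hγ : 0 < γ) :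
    (1 - ε) * (Real.log (1 - ε) + γ) +
        ε * (Real.log (1 / (1 - Real.exp (-γ))) + Real.log ε) ≥
      (1 - ε) * γ - ε * (Real.log (1 / ε) + 2 * (1 - ε)) := by
  obtain ⟨hε0, hε2⟩ := hε
  have h1ε : (0:ℝ) < 1 - ε := by linarith
  have he : Real.exp (-γ) < 1 := by
    rw [Real.exp_lt_one_iff]; linarith
  have he0 : 0 < 1 - Real.exp (-γ) := by linarith
  have hlog1 : 0 ≤ Real.log (1 / (1 - Real.exp (-γ))) := by
    apply Real.log_nonneg
    rw [le_div_iff₀ he0]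
    have := Real.exp_pos (-γ); linarith
  have hinv : Real.log (1 / ε) = - Real.log ε := by
    rw [one_div, Real.log_inv]
  have hkey : -(2 * ε) ≤ Real.log (1 - ε) := by
    rw [Real.le_log_iff_exp_le h1ε]
    have h1 : 1 + 2 * ε ≤ Real.exp (2 * ε) := by
      have := Real.add_one_le_exp (2 * ε); linarith
    have h2 : Real.exp (-(2 * ε)) = 1 / Real.exp (2 * ε) := by
      rw [Real.exp_neg, one_div]
    rw [h2]
    have hp : (0:ℝ) < 1 + 2 * ε := by linarith
    have h3 : 1 / Real.exp (2 * ε) ≤ 1 / (1 + 2 * ε) := by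
      apply one_div_le_one_div_of_le hp h1
    have h4 : 1 / (1 + 2 * ε) ≤ 1 - ε := by
      rw [div_le_iff₀ hp]; nlinarith
    linarith
  have hterm : -(2 * ε * (1 - ε)) ≤ (1 - ε) * Real.log (1 - ε) := by
    nlinarith [mul_le_mul_of_nonneg_right hkey h1ε.le]
  have hεlog : 0 ≤ ε * Real.log (1 / (1 - Real.exp (-γ))) :=
    mul_nonneg hε0.le hlog1
  rw [hinv]
  nlinarith
end

section
/- For the erasure channel with erasure probability β ∈ (0,1), the parametric high-rate reliability curve satisfies: if R = α / (α + ln((1-β)/(1-e^α β))) for some α ∈ (0, -ln β), then R is a strictly decreasing function of α, with R → 1 - β (the capacity in packets per channel use) as α → 0, and R → 0 as α → -ln β. -/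
open Real Filter

/-- The uncertainty-focusing rate of the erasure channel at exponent `α`. -/
noncomputable def focusRate (β α : ℝ) : ℝ :=
  α / (α + Real.log ((1 - β) / (1 - Real.exp α * β)))

namespace FocusRateAux

noncomputable def gfun (β α : ℝ) : ℝ := Real.log ((1 - β) / (1 - Real.exp α * β))

lemma focusRate_eq (β α : ℝ) : focusRate β α = α / (α + gfun β α) := rfl

lemma gfun_eq {β : ℝ} (hβ1 : β < 1) {α : ℝ} (h : Real.exp α * β < 1) :
    gfun β α = Real.log (1 - β) - Real.log (1 - Real.exp α * β) := by
  unfold gfun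
  rw [Real.log_div (by linarith) (by linarith)]

lemma gfun_zero {β : ℝ} (hβ1 : β < 1) : gfun β 0 = 0 := by
  unfold gfun
  rw [Real.exp_zero, one_mul, div_self (by linarith), Real.log_one]

lemma expmul_lt {β : ℝ} (hβ0 : 0 < β) {α : ℝ} (h : α < -Real.log β) :
    Real.exp α * β < 1 := by
  have h1 : Real.exp α < Real.exp (-Real.log β) := Real.exp_lt_exp.2 h
  have h2 : Real.exp (-Real.log β) = β⁻¹ := by
    rw [Real.exp_neg, Real.exp_log hβ0]
  rw [h2] at h1
  calc Real.exp α * β < β⁻¹ * β := by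
        exact mul_lt_mul_of_pos_right h1 hβ0
    _ = 1 := inv_mul_cancel₀ (ne_of_gt hβ0)

lemma hasDerivAt_gfun {β : ℝ} (hβ1 : β < 1) {α : ℝ} (h : Real.exp α * β < 1) :
    HasDerivAt (gfun β) (Real.exp α * β / (1 - Real.exp α * β)) α := by
  have hev : ∀ᶠ x in nhds α, Real.exp x * β < 1 := by
    have hc : Continuous fun x : ℝ => Real.exp x * β := by continuity
    have : IsOpen {x : ℝ | Real.exp x * β < 1} :=
      isOpen_lt hc continuous_const
    exact this.mem_nhds h
  have hopen : (fun x => Real.log (1 - β) - Real.log (1 - Real.exp x * β)) =ᶠ[nhds α]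
      gfun β := by
    filter_upwards [hev] with x hx using (gfun_eq hβ1 hx).symm
  have h1 : HasDerivAt (fun x => 1 - Real.exp x * β) (-(Real.exp α * β)) α := by
    simpa using ((Real.hasDerivAt_exp α).mul_const β).const_sub 1
  have h2 : HasDerivAt (fun x => Real.log (1 - Real.exp x * β))
      (-(Real.exp α * β) / (1 - Real.exp α * β)) α := h1.log (by linarith)
  have h3 : HasDerivAt (fun x => Real.log (1 - β) - Real.log (1 - Real.exp x * β))
      (Real.exp α * β / (1 - Real.exp α * β)) α := by
    simpa [neg_div] using h2.const_sub (Real.log (1 - β))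
  exact h3.congr_of_eventuallyEq hopen.symm

lemma gfun_pos {β : ℝ} (hβ0 : 0 < β) (hβ1 : β < 1) {α : ℝ} (hα : 0 < α)
    (h : Real.exp α * β < 1) : 0 < gfun β α := by
  rw [gfun_eq hβ1 h]
  have h1 : 1 < Real.exp α := by
    rw [← Real.exp_zero]; exact Real.exp_lt_exp.2 hα
  have h2 : β < Real.exp α * β := by nlinarith
  have : Real.log (1 - Real.exp α * β) < Real.log (1 - β) :=
    Real.log_lt_log (by linarith) (by linarith)
  linarith

lemma strictConvex_gfun {β : ℝ} (hβ0 : 0 < β) (hβ1 : β < 1) :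
    StrictConvexOn ℝ (Set.Ico 0 (-Real.log β)) (gfun β) := by
  have hL : 0 < -Real.log β := by
    have := Real.log_neg hβ0 hβ1; linarith
  apply StrictMonoOn.strictConvexOn_of_deriv (convex_Ico _ _)
  · intro α hα
    have h : Real.exp α * β < 1 := expmul_lt hβ0 hα.2
    have hc : ContinuousAt (fun x => (1 - β) / (1 - Real.exp x * β)) α :=
      ContinuousAt.div continuousAt_const (by fun_prop) (by linarith)
    have hval : (0:ℝ) < (1 - β) / (1 - Real.exp α * β) :=
      div_pos (by linarith) (by linarith)
    exact (hc.log (ne_of_gt hval)).continuousWithinAt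
  · rw [interior_Ico]
    intro x hx y hy hxy
    have hxl : Real.exp x * β < 1 := expmul_lt hβ0 hx.2
    have hyl : Real.exp y * β < 1 := expmul_lt hβ0 hy.2
    rw [(hasDerivAt_gfun hβ1 hxl).deriv, (hasDerivAt_gfun hβ1 hyl).deriv]
    have hex : Real.exp x < Real.exp y := Real.exp_lt_exp.2 hxy
    rw [div_lt_div_iff₀ (by linarith) (by linarith)]
    nlinarith [Real.exp_pos x, Real.exp_pos y]

end FocusRateAux

open FocusRateAux in
/-- On `(0, -ln β)` the uncertainty-focusing rate is strictly decreasing in `α`, tends to the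
capacity `1 - β` as `α → 0⁺`, and tends to `0` as `α → (-ln β)⁻`. -/
theorem focusRate_strictAnti_and_limits (β : ℝ) (hβ : β ∈ Set.Ioo (0 : ℝ) 1) :
    StrictAntiOn (focusRate β) (Set.Ioo 0 (-Real.log β)) ∧
      Tendsto (focusRate β) (nhdsWithin 0 (Set.Ioi 0)) (nhds (1 - β)) ∧
      Tendsto (focusRate β) (nhdsWithin (-Real.log β) (Set.Iio (-Real.log β))) (nhds 0) := by
  obtain ⟨hβ0, hβ1⟩ := hβ
  set L := -Real.log β with hLdef
  have hL : 0 < L := by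
    have := Real.log_neg hβ0 hβ1; simp only [hLdef]; linarith
  refine ⟨?_, ?_, ?_⟩
  · -- strict antitonicity
    intro x hx y hy hxy
    have hgx : 0 < gfun β x := gfun_pos hβ0 hβ1 hx.1 (expmul_lt hβ0 hx.2)
    have hgy : 0 < gfun β y := gfun_pos hβ0 hβ1 hy.1 (expmul_lt hβ0 hy.2)
    have hconv := strictConvex_gfun hβ0 hβ1
    have hx0 : (0:ℝ) ∈ Set.Ico 0 L := ⟨le_refl 0, hL⟩
    have hyI : y ∈ Set.Ico 0 L := ⟨le_of_lt hy.1, hy.2⟩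
    have hy0 : (0:ℝ) < y := hy.1
    have hxp : (0:ℝ) < x := hx.1
    have ha : (0:ℝ) < 1 - x / y := by
      have : x / y < 1 := (div_lt_one hy0).2 hxy
      linarith
    have hb : (0:ℝ) < x / y := div_pos hxp hy0
    have key := hconv.2 hx0 hyI (by exact ne_of_lt hy0) ha hb (by ring)
    have hxy' : (1 - x / y) • (0:ℝ) + (x / y) • y = x := by
      rw [smul_zero, zero_add, smul_eq_mul, div_mul_cancel₀ x (ne_of_gt hy0)]
    rw [hxy', gfun_zero hβ1] at key
    -- key : gfun β x < (1 - x/y) • 0 + (x/y) • gfun β y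
    have hkey : y * gfun β x < x * gfun β y := by
      have : gfun β x < x / y * gfun β y := by
        simpa using key
      calc y * gfun β x < y * (x / y * gfun β y) := by
            exact mul_lt_mul_of_pos_left this hy0
        _ = x * gfun β y := by field_simp
    rw [focusRate_eq, focusRate_eq, div_lt_div_iff₀ (by linarith) (by linarith)]
    nlinarith
  · -- limit at 0⁺
    have hβexp : Real.exp 0 * β < 1 := by
      rw [Real.exp_zero, one_mul]; exact hβ1
    have hd0 : HasDerivAt (gfun β) (β / (1 - β)) 0 := by
      simpa using hasDerivAt_gfun hβ1 hβexp
    have hslope : Tendsto (fun α => gfun β α / α) (nhdsWithin 0 (Set.Ioi 0))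
        (nhds (β / (1 - β))) := by
      have h1 := hasDerivAt_iff_tendsto_slope.1 hd0
      have h2 : Tendsto (slope (gfun β) 0) (nhdsWithin 0 (Set.Ioi 0))
          (nhds (β / (1 - β))) :=
        h1.mono_left (nhdsWithin_mono _ fun z hz => ne_of_gt hz)
      refine h2.congr' ?_
      filter_upwards [self_mem_nhdsWithin] with α (hα : 0 < α)
      simp [slope_def_field, gfun_zero hβ1]
    have hlim : Tendsto (fun α => 1 / (1 + gfun β α / α)) (nhdsWithin 0 (Set.Ioi 0))
        (nhds (1 - β)) := by
      have hden : Tendsto (fun α => 1 + gfun β α / α) (nhdsWithin 0 (Set.Ioi 0))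
          (nhds (1 + β / (1 - β))) := tendsto_const_nhds.add hslope
      have hne : (1 : ℝ) + β / (1 - β) ≠ 0 := by
        have : 0 < β / (1 - β) := div_pos hβ0 (by linarith)
        positivity
      have := (tendsto_const_nhds (x := (1:ℝ))).div hden hne
      convert this using 2
      · rfl
      · have h1β : (1:ℝ) - β ≠ 0 := by linarith
        field_simp
        ring
    refine hlim.congr' ?_
    filter_upwards [self_mem_nhdsWithin] with α (hα : 0 < α)
    rw [focusRate_eq]
    have hαne : α ≠ 0 := ne_of_gt hα
    rw [show (1 : ℝ) + gfun β α / α = (α + gfun β α) / α by field_simp, one_div_div]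
  · -- limit at L⁻
    have h1 : Tendsto (fun α => 1 - Real.exp α * β) (nhdsWithin L (Set.Iio L))
        (nhdsWithin 0 (Set.Ioi 0)) := by
      apply tendsto_nhdsWithin_of_tendsto_nhds_of_eventually_within
      · have hc : Continuous fun α : ℝ => 1 - Real.exp α * β := by continuity
        have hval : 1 - Real.exp L * β = 0 := by
          rw [hLdef, Real.exp_neg, Real.exp_log hβ0, inv_mul_cancel₀ (ne_of_gt hβ0)]
          ring
        have := (hc.tendsto L).mono_left (nhdsWithin_le_nhds (s := Set.Iio L))
        rwa [hval] at this
      · filter_upwards [self_mem_nhdsWithin] with α (hα : α < L)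
        exact Set.mem_Ioi.2 (by linarith [expmul_lt hβ0 hα])
    have h2 : Tendsto (fun α => Real.log (1 - Real.exp α * β))
        (nhdsWithin L (Set.Iio L)) atBot :=
      Real.tendsto_log_nhdsGT_zero.comp h1
    have h3 : Tendsto (gfun β) (nhdsWithin L (Set.Iio L)) atTop := by
      have hneg : Tendsto (fun α => -Real.log (1 - Real.exp α * β))
          (nhdsWithin L (Set.Iio L)) atTop := tendsto_neg_atBot_atTop.comp h2
      have := tendsto_atTop_add_const_left _ (Real.log (1 - β)) hneg
      refine this.congr' ?_
      filter_upwards [self_mem_nhdsWithin] with α (hα : α < L)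
      rw [gfun_eq hβ1 (expmul_lt hβ0 hα)]
      ring
    have h4 : Tendsto (fun α => α + gfun β α) (nhdsWithin L (Set.Iio L)) atTop := by
      have hid : Tendsto (fun α : ℝ => α) (nhdsWithin L (Set.Iio L)) (nhds L) :=
        tendsto_id.mono_left nhdsWithin_le_nhds
      exact hid.add_atTop h3
    have hid : Tendsto (fun α : ℝ => α) (nhdsWithin L (Set.Iio L)) (nhds L) :=
      tendsto_id.mono_left nhdsWithin_le_nhds
    exact hid.div_atTop h4
end

section
/- Pure feedback error correction with imperfect feedback is bounded away from capacity: for β_f, β_b ∈ (0,1), lim_{α→0} (C_f - 1)/C_f · α / (α + ln((1-β_f)(1-β_b)/(1 - e^α(1-(1-β_f)(1-β_b))))) = (C_f-1)/C_f · (1-β_f)(1-β_b), which is strictly less than the forward capacity 1-β_f for all β_b > 0. -/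
open Real Filter

/-- Pure feedback error correction with imperfect feedback is bounded away from capacity:
the rate of the repeat-until-success scheme tends, as `α → 0⁺`, to
`((C_f-1)/C_f)(1-β_f)(1-β_b)`, which is strictly below the forward capacity `1 - β_f`. -/
theorem pure_feedback_bounded_away (βf βb : ℝ) (hβf : βf ∈ Set.Ioo (0 : ℝ) 1)
    (hβb : βb ∈ Set.Ioo (0 : ℝ) 1) (Cf : ℕ) (hCf : 2 ≤ Cf) :
    Tendsto
      (fun α : ℝ => ((Cf : ℝ) - 1) / (Cf : ℝ) *
        (α / (α + Real.log ((1 - βf) * (1 - βb) /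
          (1 - Real.exp α * (1 - (1 - βf) * (1 - βb)))))))
      (nhdsWithin 0 (Set.Ioi 0))
      (nhds (((Cf : ℝ) - 1) / (Cf : ℝ) * ((1 - βf) * (1 - βb)))) ∧
    ((Cf : ℝ) - 1) / (Cf : ℝ) * ((1 - βf) * (1 - βb)) < 1 - βf := by
  obtain ⟨hf0, hf1⟩ := hβf
  obtain ⟨hb0, hb1⟩ := hβb
  set p : ℝ := (1 - βf) * (1 - βb) with hp
  have hp0 : 0 < p := mul_pos (by linarith) (by linarith)
  have hpf : p < 1 - βf := by
    have := mul_lt_mul_of_pos_left (show 1 - βb < 1 by linarith) (show 0 < 1 - βf by linarith)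
    simpa [hp] using this
  have hp1 : p < 1 := by linarith
  set g : ℝ → ℝ := fun α => α + Real.log (p / (1 - Real.exp α * (1 - p))) with hg
  have hg0 : g 0 = 0 := by
    simp [hg, div_self (ne_of_gt hp0)]
  have hd : HasDerivAt g (1 / p) 0 := by
    have h1 : HasDerivAt (fun α : ℝ => 1 - Real.exp α * (1 - p)) (-(1 - p)) 0 := by
      have := ((Real.hasDerivAt_exp 0).mul_const (1 - p)).const_sub 1
      simpa using this
    have hden : (1 : ℝ) - Real.exp 0 * (1 - p) ≠ 0 := by
      simp; linarith
    have h2 : HasDerivAt (fun α : ℝ => p / (1 - Real.exp α * (1 - p)))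
        ((1 - p) / p) 0 := by
      have := (hasDerivAt_const (0:ℝ) p).fun_div h1 hden
      refine this.congr_deriv ?_
      rw [Real.exp_zero, one_mul, sub_sub_cancel]
      field_simp
      ring
    have hval : p / (1 - Real.exp 0 * (1 - p)) ≠ 0 := by
      simp
      exact ne_of_gt hp0
    have h3 := h2.log hval
    have h4 := (hasDerivAt_id (0:ℝ)).add h3
    refine h4.congr_deriv ?_
    simp
    field_simp
    ring
  have hslope : Tendsto (slope g 0) (nhdsWithin 0 {0}ᶜ) (nhds (1 / p)) :=
    hasDerivAt_iff_tendsto_slope.mp hd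
  have hinv : Tendsto (fun α => (slope g 0 α)⁻¹) (nhdsWithin 0 {0}ᶜ)
      (nhds ((1 / p)⁻¹)) :=
    hslope.inv₀ (by positivity)
  have hsub : nhdsWithin (0:ℝ) (Set.Ioi 0) ≤ nhdsWithin 0 {0}ᶜ :=
    nhdsWithin_mono 0 (fun x hx => ne_of_gt hx)
  have hmain : Tendsto (fun α => α / g α) (nhdsWithin (0:ℝ) (Set.Ioi 0)) (nhds p) := by
    have : Tendsto (fun α => (slope g 0 α)⁻¹) (nhdsWithin (0:ℝ) (Set.Ioi 0))
        (nhds ((1 / p)⁻¹)) := hinv.mono_left hsub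
    rw [one_div, inv_inv] at this
    refine this.congr (fun α => ?_)
    simp [slope_def_field, hg0, div_eq_mul_inv, inv_div]
  constructor
  · exact hmain.const_mul _
  · have hC : (0:ℝ) < (Cf : ℝ) := by
      have : 0 < Cf := by omega
      exact_mod_cast this
    have h1 : ((Cf : ℝ) - 1) / (Cf : ℝ) ≤ 1 := by
      rw [div_le_one hC]; linarith
    calc ((Cf : ℝ) - 1) / (Cf : ℝ) * p ≤ 1 * p :=
          mul_le_mul_of_nonneg_right h1 hp0.le
      _ = p := one_mul p
      _ < 1 - βf := hpf
end
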